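/- If p(y) ≤ δ for all y in the finite support, then log(n) − (n−1)/n − KL(π⁽ⁿ⁾ ‖ p) ≤ 2n(n−1)δ, where π⁽ⁿ⁾ is the best-of-n policy. -/

import Mathlib

open Finset Real


lemma aux_pow_sub_pow_le {a b : ℝ} (n : ℕ) (ha : 0 ≤ a) (hab : a ≤ b) :
    b ^ n - a ^ n ≤ n * (b - a) * b ^ (n - 1) := by
  rw [← geom_sum₂_mul]
  have hb : 0 ≤ b := ha.trans hab
  have : (∑ i ∈ range n, b ^ i * a ^ (n - 1 - i)) ≤ n * b ^ (n - 1) := by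
    calc (∑ i ∈ range n, b ^ i * a ^ (n - 1 - i))
        ≤ ∑ i ∈ range n, b ^ (n - 1) := by
          apply Finset.sum_le_sum
          intro i hi
          calc b ^ i * a ^ (n - 1 - i) ≤ b ^ i * b ^ (n - 1 - i) := by
                apply mul_le_mul_of_nonneg_left (pow_le_pow_left₀ ha hab _) (pow_nonneg hb _)
            _ = b ^ (i + (n - 1 - i)) := (pow_add b i _).symm
            _ = b ^ (n - 1) := by
                congr 1
                have := Finset.mem_range.mp hi
                omega
      _ = n * b ^ (n - 1) := by rw [Finset.sum_const, card_range, nsmul_eq_mul]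
  calc (∑ i ∈ range n, b ^ i * a ^ (n - 1 - i)) * (b - a)
      ≤ (n * b ^ (n - 1)) * (b - a) := mul_le_mul_of_nonneg_right this (by linarith)
    _ = n * (b - a) * b ^ (n - 1) := by ring


lemma aux_hh {a b : ℝ} (n : ℕ) (hn : 1 ≤ n) (ha : 0 ≤ a) (hab : a ≤ b) :
    n * (b - a) * ((a + b) / 2) ^ (n - 1) ≤ b ^ n - a ^ n := by
  obtain ⟨m, hm⟩ : ∃ m : ℝ, m = (a + b) / 2 := ⟨_, rfl⟩
  obtain ⟨h, hh⟩ : ∃ h : ℝ, h = (b - a) / 2 := ⟨_, rfl⟩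
  have hmh : m + h = b := by rw [hm, hh]; ring
  have hmh' : m - h = a := by rw [hm, hh]; ring
  have h0 : 0 ≤ h := by rw [hh]; linarith
  have hm0 : 0 ≤ m := by rw [hm]; linarith
  have hhm : h ≤ m := by rw [hh, hm]; linarith
  have expand : b ^ n - a ^ n
      = ∑ k ∈ range (n + 1), m ^ k * (h ^ (n - k) - (-h) ^ (n - k)) * n.choose k := by
    rw [← hmh, ← hmh', add_pow, sub_eq_add_neg m h, add_pow, ← Finset.sum_sub_distrib]
    apply Finset.sum_congr rfl
    intro k _
    ring
  rw [expand]
  have hterm : ∀ k ∈ range (n + 1),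
      (0:ℝ) ≤ m ^ k * (h ^ (n - k) - (-h) ^ (n - k)) * n.choose k := by
    intro k _
    apply mul_nonneg (mul_nonneg (pow_nonneg hm0 _) ?_) (Nat.cast_nonneg _)
    rcases Nat.even_or_odd (n - k) with he | ho
    · rw [he.neg_pow]; simp
    · rw [ho.neg_pow]
      have := pow_nonneg h0 (n - k)
      linarith
  have hmem : n - 1 ∈ range (n + 1) := by
    rw [Finset.mem_range]; omega
  have hsingle := Finset.single_le_sum hterm hmem
  refine le_trans (le_of_eq ?_) hsingle
  have h1 : n - (n - 1) = 1 := by omega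
  rw [h1]
  have h2 : n.choose (n - 1) = n := by
    rw [← Nat.choose_symm (Nat.sub_le n 1)]
    have : n - (n - 1) = 1 := by omega
    rw [this, Nat.choose_one_right]
  rw [h2, hm, hh]
  ring


lemma aux_log_pow {a b : ℝ} (n : ℕ) (hn : 1 ≤ n) (ha : 0 ≤ a) (hab : a ≤ b) (hb : 0 < b) :
    a ^ n * (Real.log b - Real.log a) ≤ (b ^ n - a ^ n) / n := by
  rcases eq_or_lt_of_le ha with rfl | ha'
  · rw [zero_pow (by omega)]
    have : (0:ℝ) ≤ b ^ n := pow_nonneg hb.le n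
    simp
    positivity
  · have hba : 0 < b / a := by positivity
    have key : Real.log b - Real.log a ≤ ((b/a) ^ n - 1) / n := by
      have h1 : Real.log b - Real.log a = Real.log (b / a) := (Real.log_div hb.ne' ha'.ne').symm
      have h2 : Real.log ((b/a) ^ n) ≤ (b/a) ^ n - 1 := Real.log_le_sub_one_of_pos (by positivity)
      have h3 : Real.log ((b/a) ^ n) = n * Real.log (b/a) := by
        rw [Real.log_pow]
      rw [h1]
      rw [h3] at h2
      rw [le_div_iff₀ (by positivity : (0:ℝ) < (n:ℝ)), mul_comm]
      linarith
    calc a ^ n * (Real.log b - Real.log a) ≤ a ^ n * (((b/a) ^ n - 1) / n) :=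
          mul_le_mul_of_nonneg_left key (pow_nonneg ha n)
      _ = (b ^ n - a ^ n) / n := by
          rw [div_pow]
          field_simp


lemma aux_tel {Y : Type*} [Fintype Y] (p : Y → ℝ) (r : Y → ℝ) (hr : Function.Injective r)
    (g : ℝ → ℝ) :
    ∑ y, (g (∑ z ∈ Finset.univ.filter (fun z => r z ≤ r y), p z)
        - g (∑ z ∈ Finset.univ.filter (fun z => r z < r y), p z))
      = g (∑ z, p z) - g 0 := by
  letI : LinearOrder Y := LinearOrder.lift' r hr
  have hle : ∀ a b : Y, a ≤ b ↔ r a ≤ r b := fun a b => Iff.rfl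
  have hlt : ∀ a b : Y, a < b ↔ r a < r b := fun a b => lt_iff_lt_of_le_iff_le' (hle b a) (hle a b)
  set N := Fintype.card Y with hN
  let e := monoEquivOfFin Y hN.symm
  let T : ℕ → ℝ := fun k => ∑ j ∈ Finset.univ.filter (fun j : Fin N => (j : ℕ) < k), p (e j)
  have hA : ∀ i : Fin N, (∑ z ∈ Finset.univ.filter (fun z => r z ≤ r (e i)), p z)
      = T ((i : ℕ) + 1) := by
    intro i
    refine Finset.sum_equiv e.toEquiv.symm ?_ ?_
    · intro z
      simp only [Finset.mem_filter, Finset.mem_univ, true_and]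
      rw [← hle, Nat.lt_succ_iff,
        show ((e.toEquiv.symm z : ℕ) ≤ (i:ℕ)) ↔ e.symm z ≤ i from Iff.rfl]
      exact e.symm_apply_le.symm
    · intro z _
      simp
  have hB : ∀ i : Fin N, (∑ z ∈ Finset.univ.filter (fun z => r z < r (e i)), p z)
      = T (i : ℕ) := by
    intro i
    refine Finset.sum_equiv e.toEquiv.symm ?_ ?_
    · intro z
      simp only [Finset.mem_filter, Finset.mem_univ, true_and]
      rw [← hlt, show ((e.toEquiv.symm z : ℕ) < (i:ℕ)) ↔ e.symm z < i from Iff.rfl]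
      constructor
      · intro h
        have := e.symm.lt_iff_lt.mpr h
        simpa using this
      · intro h
        have := e.lt_iff_lt.mpr h
        simpa using this
    · intro z _
      simp
  have hTN : T N = ∑ z, p z := by
    have : Finset.univ.filter (fun j : Fin N => (j : ℕ) < N) = Finset.univ := by
      apply Finset.filter_true_of_mem
      intro j _
      exact j.isLt
    rw [show T N = ∑ j ∈ Finset.univ.filter (fun j : Fin N => (j : ℕ) < N), p (e j) from rfl, this]
    exact Fintype.sum_equiv e.toEquiv _ _ (fun j => rfl)
  have hT0 : T 0 = 0 := by simp [T]
  calc ∑ y, (g (∑ z ∈ Finset.univ.filter (fun z => r z ≤ r y), p z)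
        - g (∑ z ∈ Finset.univ.filter (fun z => r z < r y), p z))
      = ∑ i : Fin N, (g (T ((i:ℕ)+1)) - g (T (i:ℕ))) := by
        refine (Fintype.sum_equiv e.toEquiv _ _ ?_).symm
        intro i
        simp only [show ⇑e.toEquiv = ⇑e from rfl]
        rw [hA i, hB i]
    _ = ∑ i ∈ range N, (g (T (i+1)) - g (T i)) :=
        Fin.sum_univ_eq_sum_range (fun i => g (T (i+1)) - g (T i)) N
    _ = g (T N) - g (T 0) := Finset.sum_range_sub (fun i => g (T i)) N
    _ = g (∑ z, p z) - g 0 := by rw [hTN, hT0]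


lemma aux_key (n : ℕ) (hn : 1 ≤ n) {a b : ℝ} (ha : 0 ≤ a) (hab : a < b) (hb1 : b ≤ 1) :
    (b ^ n - a ^ n) * Real.log n + ((n:ℝ) - 1) * (b ^ n * Real.log b - a ^ n * Real.log a)
      - ((n:ℝ) - 1) / n * (b ^ n - a ^ n) - ((n:ℝ) - 1) * n * (b - a) ^ 2
    ≤ (b ^ n - a ^ n) * Real.log ((b ^ n - a ^ n) / (b - a)) := by
  have hb0 : 0 < b := lt_of_le_of_lt ha hab
  have hq : 0 < b - a := by linarith
  have hn0 : (0:ℝ) < n := by exact_mod_cast hn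
  obtain ⟨m, hm⟩ : ∃ m : ℝ, m = (a + b) / 2 := ⟨_, rfl⟩
  have hm0 : 0 < m := by rw [hm]; linarith
  have hmb : m ≤ b := by rw [hm]; linarith
  have hπ : 0 < b ^ n - a ^ n := by
    have := pow_lt_pow_left₀ hab ha (by omega : n ≠ 0)
    linarith
  -- Step A : log n + (n-1) log m ≤ log ((b^n - a^n)/(b-a))
  have hA : Real.log n + ((n:ℝ) - 1) * Real.log m ≤ Real.log ((b ^ n - a ^ n) / (b - a)) := by
    have h1 : (n:ℝ) * m ^ (n-1) ≤ (b ^ n - a ^ n) / (b - a) := by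
      rw [le_div_iff₀ hq, hm]
      calc (n:ℝ) * ((a + b) / 2) ^ (n-1) * (b - a) = n * (b - a) * ((a + b) / 2) ^ (n-1) := by ring
        _ ≤ b ^ n - a ^ n := aux_hh n hn ha hab.le
    have h2 : (0:ℝ) < (n:ℝ) * m ^ (n-1) := by positivity
    calc Real.log n + ((n:ℝ) - 1) * Real.log m
        = Real.log ((n:ℝ) * m ^ (n-1)) := by
          rw [Real.log_mul (ne_of_gt hn0) (by positivity), Real.log_pow]
          have : ((n - 1 : ℕ) : ℝ) = (n:ℝ) - 1 := by
            have : 1 ≤ n := hn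
            push_cast [Nat.cast_sub this]
            ring
          rw [this]
      _ ≤ Real.log ((b ^ n - a ^ n) / (b - a)) := Real.log_le_log h2 h1
  -- Step B : (n-1) * ((b^n - a^n) * (log b - log m)) ≤ (n-1) * n * (b-a)^2
  have hB : ((n:ℝ) - 1) * ((b ^ n - a ^ n) * (Real.log b - Real.log m))
      ≤ ((n:ℝ) - 1) * n * (b - a) ^ 2 := by
    rcases eq_or_lt_of_le hn with h1 | h2
    · rw [← h1]; norm_num
    · have hn2 : 2 ≤ n := h2
      have hlm : Real.log b - Real.log m ≤ (b - a) / (2 * m) := by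
        have := Real.log_le_sub_one_of_pos (show (0:ℝ) < b / m by positivity)
        rw [Real.log_div (ne_of_gt hb0) (ne_of_gt hm0)] at this
        have h3 : b / m - 1 = (b - m) / m := by
          rw [sub_div, div_self (ne_of_gt hm0)]
        rw [h3] at this
        have h4 : b - m = (b - a) / 2 := by rw [hm]; ring
        rw [h4] at this
        calc Real.log b - Real.log m ≤ (b - a) / 2 / m := this
          _ = (b - a) / (2 * m) := by ring
      have hlm0 : 0 ≤ Real.log b - Real.log m := by
        have := Real.log_le_log hm0 hmb
        linarith
      have hπle : b ^ n - a ^ n ≤ n * (b - a) * b ^ (n - 1) := aux_pow_sub_pow_le n ha hab.le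
      have hbn1 : b ^ (n - 1) ≤ 2 * m := by
        calc b ^ (n - 1) ≤ b ^ 1 := pow_le_pow_of_le_one hb0.le hb1 (by omega)
          _ = b := pow_one b
          _ ≤ 2 * m := by rw [hm]; linarith
      have hmain : (b ^ n - a ^ n) * (Real.log b - Real.log m) ≤ (n:ℝ) * (b - a) ^ 2 := by
        calc (b ^ n - a ^ n) * (Real.log b - Real.log m)
            ≤ (n * (b - a) * b ^ (n - 1)) * ((b - a) / (2 * m)) := by
              apply mul_le_mul hπle hlm hlm0
              positivity
          _ = (n:ℝ) * (b - a) ^ 2 * (b ^ (n - 1) / (2 * m)) := by ring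
          _ ≤ (n:ℝ) * (b - a) ^ 2 * 1 := by
              apply mul_le_mul_of_nonneg_left _ (by positivity)
              rw [div_le_one (by positivity)]
              exact hbn1
          _ = (n:ℝ) * (b - a) ^ 2 := by ring
      calc ((n:ℝ) - 1) * ((b ^ n - a ^ n) * (Real.log b - Real.log m))
          ≤ ((n:ℝ) - 1) * ((n:ℝ) * (b - a) ^ 2) := by
            apply mul_le_mul_of_nonneg_left hmain
            have : (1:ℝ) ≤ (n:ℝ) := by exact_mod_cast hn
            linarith
        _ = ((n:ℝ) - 1) * n * (b - a) ^ 2 := by ring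
  -- Step C : a^n * (log b - log a) ≤ (b^n - a^n)/n
  have hC : a ^ n * (Real.log b - Real.log a) ≤ (b ^ n - a ^ n) / n :=
    aux_log_pow n hn ha hab.le hb0
  -- Combine
  have hmul : (b ^ n - a ^ n) * (Real.log n + ((n:ℝ) - 1) * Real.log m)
      ≤ (b ^ n - a ^ n) * Real.log ((b ^ n - a ^ n) / (b - a)) :=
    mul_le_mul_of_nonneg_left hA hπ.le
  have hCn : ((n:ℝ) - 1) * (a ^ n * (Real.log b - Real.log a))
      ≤ ((n:ℝ) - 1) * ((b ^ n - a ^ n) / n) := by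
    apply mul_le_mul_of_nonneg_left hC
    have : (1:ℝ) ≤ (n:ℝ) := by exact_mod_cast hn
    linarith
  ring_nf at hmul hB hCn ⊢
  linarith [hmul, hB, hCn]


theorem stmt_12
    {Y : Type*} [Fintype Y]
    (p : Y → ℝ) (r : Y → ℝ) (δ : ℝ)
    (hp : ∀ y, 0 < p y) (hsum : ∑ y, p y = 1)
    (hδ : ∀ y, p y ≤ δ)
    (hr : Function.Injective r)
    (n : ℕ) (hn : 1 ≤ n)
    (F Fm : Y → ℝ)
    (hF : ∀ y, F y = ∑ z ∈ Finset.univ.filter (fun z => r z ≤ r y), p z)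
    (hFm : ∀ y, Fm y = ∑ z ∈ Finset.univ.filter (fun z => r z < r y), p z) :
    (Real.log n - ((n : ℝ) - 1) / n) -
        ∑ y : Y, (F y ^ n - Fm y ^ n) * Real.log ((F y ^ n - Fm y ^ n) / p y) ≤
      2 * n * ((n : ℝ) - 1) * δ := by
  classical
  have hY : Nonempty Y := by
    by_contra h
    rw [not_nonempty_iff] at h
    haveI := h
    simp at hsum
  have hδ0 : 0 < δ := lt_of_lt_of_le (hp (Classical.arbitrary Y)) (hδ _)
  have hn1 : (1:ℝ) ≤ (n:ℝ) := by exact_mod_cast hn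
  have hFm0 : ∀ y, 0 ≤ Fm y := by
    intro y
    rw [hFm]
    exact Finset.sum_nonneg fun z _ => (hp z).le
  have hF1 : ∀ y, F y ≤ 1 := by
    intro y
    rw [hF, ← hsum]
    exact Finset.sum_le_sum_of_subset_of_nonneg (Finset.filter_subset _ _)
      (fun z _ _ => (hp z).le)
  have hFeq : ∀ y, F y = Fm y + p y := by
    intro y
    rw [hF, hFm]
    have hset : Finset.univ.filter (fun z => r z ≤ r y)
        = insert y (Finset.univ.filter (fun z => r z < r y)) := by
      ext z
      simp only [Finset.mem_filter, Finset.mem_univ, true_and, Finset.mem_insert]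
      constructor
      · intro hz
        rcases lt_or_eq_of_le hz with h | h
        · exact Or.inr h
        · exact Or.inl (hr h)
      · rintro (rfl | h)
        · exact le_refl _
        · exact h.le
    rw [hset, Finset.sum_insert (by simp)]
    ring
  have key : ∀ y : Y,
      (F y ^ n - Fm y ^ n) * Real.log n
        + ((n:ℝ) - 1) * (F y ^ n * Real.log (F y) - Fm y ^ n * Real.log (Fm y))
        - ((n:ℝ) - 1) / n * (F y ^ n - Fm y ^ n) - ((n:ℝ) - 1) * n * (p y) ^ 2
      ≤ (F y ^ n - Fm y ^ n) * Real.log ((F y ^ n - Fm y ^ n) / p y) := by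
    intro y
    have h1 : Fm y < F y := by rw [hFeq y]; linarith [hp y]
    have h2 : F y - Fm y = p y := by rw [hFeq y]; ring
    have := aux_key n hn (hFm0 y) h1 (hF1 y)
    rw [h2] at this
    exact this
  have tel1 : ∑ y, (F y ^ n - Fm y ^ n) = 1 := by
    have h := aux_tel p r hr (fun t => t ^ n)
    rw [hsum] at h
    calc ∑ y, (F y ^ n - Fm y ^ n)
        = ∑ y, ((∑ z ∈ Finset.univ.filter (fun z => r z ≤ r y), p z) ^ n
              - (∑ z ∈ Finset.univ.filter (fun z => r z < r y), p z) ^ n) :=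
          Finset.sum_congr rfl fun y _ => by rw [hF, hFm]
      _ = 1 ^ n - 0 ^ n := h
      _ = 1 := by rw [one_pow, zero_pow (by omega : n ≠ 0), sub_zero]
  have tel2 : ∑ y, (F y ^ n * Real.log (F y) - Fm y ^ n * Real.log (Fm y)) = 0 := by
    have h := aux_tel p r hr (fun t => t ^ n * Real.log t)
    rw [hsum] at h
    calc ∑ y, (F y ^ n * Real.log (F y) - Fm y ^ n * Real.log (Fm y))
        = ∑ y, ((∑ z ∈ Finset.univ.filter (fun z => r z ≤ r y), p z) ^ n
              * Real.log (∑ z ∈ Finset.univ.filter (fun z => r z ≤ r y), p z)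
              - (∑ z ∈ Finset.univ.filter (fun z => r z < r y), p z) ^ n
              * Real.log (∑ z ∈ Finset.univ.filter (fun z => r z < r y), p z)) :=
          Finset.sum_congr rfl fun y _ => by rw [hF, hFm]
      _ = 1 ^ n * Real.log 1 - 0 ^ n * Real.log 0 := h
      _ = 0 := by
          rw [one_pow, Real.log_one, zero_pow (by omega : n ≠ 0)]
          ring
  have sumsq : ∑ y, (p y) ^ 2 ≤ δ := by
    calc ∑ y, (p y) ^ 2 ≤ ∑ y, δ * p y := by
          apply Finset.sum_le_sum
          intro y _
          have h1 := hp y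
          have h2 := hδ y
          nlinarith
      _ = δ * ∑ y, p y := by rw [Finset.mul_sum]
      _ = δ := by rw [hsum, mul_one]
  have main := Finset.sum_le_sum (s := (Finset.univ : Finset Y)) (fun y _ => key y)
  have lhs_eq : ∑ y : Y,
      ((F y ^ n - Fm y ^ n) * Real.log n
        + ((n:ℝ) - 1) * (F y ^ n * Real.log (F y) - Fm y ^ n * Real.log (Fm y))
        - ((n:ℝ) - 1) / n * (F y ^ n - Fm y ^ n) - ((n:ℝ) - 1) * n * (p y) ^ 2)
      = Real.log n - ((n:ℝ) - 1) / n - ((n:ℝ) - 1) * n * (∑ y, (p y) ^ 2) := by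
    rw [Finset.sum_sub_distrib, Finset.sum_sub_distrib, Finset.sum_add_distrib,
      ← Finset.sum_mul, ← Finset.mul_sum, ← Finset.mul_sum, ← Finset.mul_sum, tel1, tel2]
    ring
  rw [lhs_eq] at main
  have h5 : (0:ℝ) ≤ ((n:ℝ) - 1) * n := mul_nonneg (by linarith) (by linarith)
  have h6 : ((n:ℝ) - 1) * n * (∑ y, (p y) ^ 2) ≤ ((n:ℝ) - 1) * n * δ :=
    mul_le_mul_of_nonneg_left sumsq h5
  have h7 : (0:ℝ) ≤ ((n:ℝ) - 1) * n * δ := mul_nonneg h5 hδ0.le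
  linarith [main, h6, h7]
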